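/- Let α > 0, s_α = (α/(2+α))^{1/2}, K = s_α^{−α−2}(1 − s_α²), and define ã_α on B_1 by ã_α(x) = K(α+2)|x|^α for |x| ≤ s_α and ã_α(x) = K(α+2)s_α^α for s_α ≤ |x| < 1. Then ∫_{B_1} |∇ã_α|² dx = π α (α+2)² s_α^{−4} (1 − s_α²)² = 4π (2+α)²/α, which tends to ∞ as α → 0⁺. -/

import Mathlib

open MeasureTheory Real Set Filter

noncomputable section

abbrev E2 := EuclideanSpace ℝ (Fin 2)

/-- i-th weak (pointwise) partial derivative -/
noncomputable def pd (f : E2 → ℝ) (i : Fin 2) (x : E2) : ℝ :=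
  fderiv ℝ f x (EuclideanSpace.single i 1)

/-- squared norm of the gradient -/
noncomputable def gradSq (f : E2 → ℝ) (x : E2) : ℝ :=
  (pd f 0 x) ^ 2 + (pd f 1 x) ^ 2

/-- the Jacobian ∇a · ∇⊥b with ∇⊥b = (−∂₂ b, ∂₁ b) -/
noncomputable def jac (a b : E2 → ℝ) (x : E2) : ℝ :=
  pd a 0 x * (-(pd b 1 x)) + pd a 1 x * (pd b 0 x)

/-- the open unit disk -/
def B1 : Set E2 := Metric.ball 0 1

/-- f ∈ W^{1,2}(B₁): f and its gradient are square integrable on B₁ -/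
def MemW12 (f : E2 → ℝ) : Prop :=
  MeasureTheory.IntegrableOn (fun x => (f x) ^ 2) B1 ∧
  MeasureTheory.IntegrableOn (gradSq f) B1

/-- φ is the weak solution of Δφ = ∇a·∇⊥b on B₁ with zero Dirichlet boundary data -/
def IsWeakSol (φ a b : E2 → ℝ) : Prop :=
  (∀ x ∈ Metric.sphere (0 : E2) 1, φ x = 0) ∧
  ∀ ψ : E2 → ℝ, ContDiff ℝ (⊤ : ℕ∞) ψ → HasCompactSupport ψ → tsupport ψ ⊆ B1 →
    ∫ x in B1, (pd φ 0 x * pd ψ 0 x + pd φ 1 x * pd ψ 1 x) =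
      - ∫ x in B1, jac a b x * ψ x

lemma hderiv13 {α : ℝ} {c : ℝ} {x : E2} (hx : x ≠ 0) :
    HasFDerivAt (fun y : E2 => c * ‖y‖ ^ α)
      (c • ((α/2 * (‖x‖^2)^(α/2-1)) • (2 • (innerSL ℝ x)))) x := by
  have h1 : HasFDerivAt (fun y : E2 => (‖y‖^2) ^ (α/2))
      ((α/2 * (‖x‖^2)^(α/2-1)) • (2 • (innerSL ℝ x))) x :=
    (hasStrictFDerivAt_norm_sq x).hasFDerivAt.rpow_const
      (Or.inl (pow_ne_zero 2 (norm_ne_zero_iff.2 hx)))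
  have h2 : (fun y : E2 => (‖y‖^2 : ℝ) ^ (α/2)) = fun y : E2 => ‖y‖ ^ α := by
    funext y
    rw [← Real.rpow_natCast ‖y‖ 2, ← Real.rpow_mul (norm_nonneg y)]
    congr 1; ring
  rw [h2] at h1
  exact h1.const_mul c

lemma happ13 {α : ℝ} {c : ℝ} {x : E2} (i : Fin 2) :
    (c • ((α/2 * (‖x‖^2)^(α/2-1)) • (2 • (innerSL ℝ x)))) (EuclideanSpace.single i 1)
      = c * α * (‖x‖^2)^(α/2-1) * x i := by
  simp only [ContinuousLinearMap.smul_apply, ContinuousLinearMap.coe_smul', Pi.smul_apply,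
    innerSL_apply_apply, EuclideanSpace.inner_single_right, smul_eq_mul, conj_trivial, one_mul]
  ring

lemma norm_sq_eq13 (x : E2) : (x 0)^2 + (x 1)^2 = ‖x‖^2 := by
  rw [EuclideanSpace.norm_eq, Real.sq_sqrt (by positivity)]
  simp [Fin.sum_univ_two, sq_abs]

lemma grad_inner13 {α c sα : ℝ} {x : E2} (hx : x ≠ 0) (h : ‖x‖ < sα) :
    gradSq (fun y : E2 => if ‖y‖ ≤ sα then c * ‖y‖ ^ α else c * sα ^ α) x
      = (c*α)^2 * (‖x‖^2)^(α-1) := by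
  have hev : (fun y : E2 => if ‖y‖ ≤ sα then c * ‖y‖ ^ α else c * sα ^ α)
      =ᶠ[nhds x] fun y : E2 => c * ‖y‖ ^ α := by
    filter_upwards [Metric.ball_mem_nhds x (show (0:ℝ) < sα - ‖x‖ by linarith)] with y hy
    have : ‖y‖ ≤ sα := by
      have := norm_sub_norm_le y x
      have hd : dist y x < sα - ‖x‖ := hy
      rw [dist_eq_norm] at hd
      linarith
    simp [this]
  have hf : ∀ i : Fin 2,
      pd (fun y : E2 => if ‖y‖ ≤ sα then c * ‖y‖ ^ α else c * sα ^ α) i x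
        = c * α * (‖x‖^2)^(α/2-1) * x i := by
    intro i
    unfold pd
    rw [hev.fderiv_eq, (hderiv13 hx).fderiv, happ13]
  unfold gradSq
  rw [hf 0, hf 1]
  have h1 : ((‖x‖^2 : ℝ)^(α/2-1))^2 = (‖x‖^2)^(α-2) := by
    rw [← Real.rpow_natCast ((‖x‖^2 : ℝ)^(α/2-1)) 2, ← Real.rpow_mul (by positivity)]
    congr 1; push_cast; ring
  have h2 : ((‖x‖^2 : ℝ))^(α-2) * ‖x‖^2 = (‖x‖^2)^(α-1) := by
    rw [show α - 1 = (α-2) + 1 by ring,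
      Real.rpow_add_one (pow_ne_zero 2 (norm_ne_zero_iff.2 hx))]
  calc (c * α * (‖x‖^2)^(α/2-1) * x 0)^2 + (c * α * (‖x‖^2)^(α/2-1) * x 1)^2
      = (c*α)^2 * ((‖x‖^2)^(α/2-1))^2 * ((x 0)^2 + (x 1)^2) := by ring
    _ = (c*α)^2 * ((‖x‖^2)^(α-2) * ‖x‖^2) := by rw [h1, norm_sq_eq13]; ring
    _ = (c*α)^2 * (‖x‖^2)^(α-1) := by rw [h2]

lemma grad_outer13 {α c sα : ℝ} {x : E2} (h : sα < ‖x‖) :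
    gradSq (fun y : E2 => if ‖y‖ ≤ sα then c * ‖y‖ ^ α else c * sα ^ α) x = 0 := by
  have hev : (fun y : E2 => if ‖y‖ ≤ sα then c * ‖y‖ ^ α else c * sα ^ α)
      =ᶠ[nhds x] fun _ : E2 => c * sα ^ α := by
    filter_upwards [Metric.ball_mem_nhds x (show (0:ℝ) < ‖x‖ - sα by linarith)] with y hy
    have : ¬ ‖y‖ ≤ sα := by
      have := norm_sub_norm_le x y
      have hd : dist y x < ‖x‖ - sα := hy
      rw [dist_comm, dist_eq_norm] at hd
      push_neg; linarith
    simp [this]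
  have hf : ∀ i : Fin 2,
      pd (fun y : E2 => if ‖y‖ ≤ sα then c * ‖y‖ ^ α else c * sα ^ α) i x = 0 := by
    intro i
    unfold pd
    rw [hev.fderiv_eq, fderiv_fun_const]
    simp
  unfold gradSq
  rw [hf 0, hf 1]; ring

lemma vol_ball_one13 : (volume (Metric.ball (0:E2) 1)).toReal = π := by
  rw [EuclideanSpace.volume_ball]
  norm_num [Real.Gamma_two, Real.sq_sqrt Real.pi_nonneg, ENNReal.toReal_ofReal Real.pi_nonneg]

lemma int_radial13 {α sα : ℝ} (hα : 0 < α) (hs : 0 < sα) :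
    ∫ x in Metric.ball (0:E2) sα, ((‖x‖^2 : ℝ))^(α-1) = π * sα ^ (2*α) / α := by
  have hmb : MeasurableSet (Metric.ball (0:E2) sα) := measurableSet_ball
  set F : ℝ → ℝ := fun r => if r < sα then ((r^2 : ℝ))^(α-1) else 0 with hF
  have h1 : ∫ x in Metric.ball (0:E2) sα, ((‖x‖^2 : ℝ))^(α-1) = ∫ x : E2, F ‖x‖ := by
    rw [← integral_indicator hmb]
    congr 1
    funext x
    by_cases hx : x ∈ Metric.ball (0:E2) sα
    · have : ‖x‖ < sα := by rwa [mem_ball_zero_iff] at hx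
      simp [hF, this, indicator_of_mem hx]
    · have : ¬ ‖x‖ < sα := by rwa [mem_ball_zero_iff] at hx
      simp [hF, this, indicator_of_notMem hx]
  rw [h1, integral_fun_norm_addHaar volume F]
  have hdim : Module.finrank ℝ E2 = 2 := by simp
  rw [hdim, measureReal_def, vol_ball_one13]
  have h2 : ∫ y in Ioi (0:ℝ), y ^ (2 - 1) • F y = sα ^ (2*α) / (2*α) := by
    have h3 : ∫ y in Ioi (0:ℝ), y ^ (2 - 1) • F y
        = ∫ y in Ioi (0:ℝ), (Ioo (0:ℝ) sα).indicator (fun y => y ^ (2*α - 1)) y := by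
      apply setIntegral_congr_fun measurableSet_Ioi
      intro y hy
      have hy0 : (0:ℝ) < y := hy
      by_cases hys : y < sα
      · rw [indicator_of_mem (by exact ⟨hy0, hys⟩)]
        simp only [hF, if_pos hys, smul_eq_mul]
        have e1 : ((y^2:ℝ))^(α-1) = y ^ (2*α - 2) := by
          rw [← Real.rpow_natCast y 2, ← Real.rpow_mul hy0.le]
          congr 1; push_cast; ring
        rw [e1, show (2-1 : ℕ) = 1 from rfl, pow_one,
          show 2*α - 1 = (2*α - 2) + 1 by ring, Real.rpow_add_one hy0.ne']
        ring
      · rw [indicator_of_notMem (by simp [hys])]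
        simp [hF, hys]
    rw [h3, integral_indicator measurableSet_Ioo,
      Measure.restrict_restrict measurableSet_Ioo,
      inter_eq_left.mpr (Ioo_subset_Ioi_self),
      ← integral_Ioc_eq_integral_Ioo, ← intervalIntegral.integral_of_le hs.le,
      integral_rpow (Or.inl (by linarith))]
    rw [Real.zero_rpow (by ring_nf; positivity)]
    ring_nf
  rw [h2, nsmul_eq_mul]
  have hα0 : α ≠ 0 := hα.ne'
  field_simp
  ring_nf
  rw [mul_right_comm α, mul_inv_cancel₀ hα0, one_mul]

/-- The Dirichlet energy of ã_α equals πα(α+2)²s_α⁻⁴(1−s_α²)² = 4π(2+α)²/α and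
blows up as α → 0⁺. -/
theorem stmt13 :
    (∀ α : ℝ, 0 < α →
      ∀ sα K : ℝ, sα = Real.sqrt (α / (2 + α)) → K = sα ^ (-α - 2) * (1 - sα ^ 2) →
        (∫ x in B1, gradSq (fun y : E2 =>
            if ‖y‖ ≤ sα then K * (α + 2) * ‖y‖ ^ α else K * (α + 2) * sα ^ α) x) =
            π * α * (α + 2) ^ 2 * sα ^ (-4 : ℝ) * (1 - sα ^ 2) ^ 2 ∧
        π * α * (α + 2) ^ 2 * sα ^ (-4 : ℝ) * (1 - sα ^ 2) ^ 2 =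
          4 * π * (2 + α) ^ 2 / α) ∧
    Tendsto (fun α : ℝ => 4 * π * (2 + α) ^ 2 / α) (nhdsWithin 0 (Set.Ioi 0)) atTop := by
  constructor
  · intro α hα sα K hsd hK
    have h2α : (0:ℝ) < 2 + α := by linarith
    have hspos : 0 < sα := by
      rw [hsd]; exact Real.sqrt_pos.mpr (by positivity)
    have hs2 : sα ^ 2 = α / (2 + α) := by
      rw [hsd, Real.sq_sqrt (by positivity)]
    have hs2lt : sα ^ 2 < 1 := by
      rw [hs2, div_lt_one h2α]; linarith
    have hs1 : sα < 1 := by nlinarith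
    set c : ℝ := K * (α + 2) with hc
    set f : E2 → ℝ := fun y => if ‖y‖ ≤ sα then c * ‖y‖ ^ α else c * sα ^ α with hf
    have hB1m : MeasurableSet B1 := measurableSet_ball
    -- step 1: a.e. identification of gradSq f
    have step1 : ∫ x in B1, gradSq f x
        = ∫ x in B1, (Metric.ball (0:E2) sα).indicator
            (fun x => (c*α)^2 * (‖x‖^2)^(α-1)) x := by
      apply setIntegral_congr_ae hB1m
      have hnull : volume (Metric.sphere (0:E2) sα ∪ {0}) = 0 :=
        measure_union_null (Measure.addHaar_sphere volume 0 sα) (measure_singleton 0)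
      filter_upwards [measure_eq_zero_iff_ae_notMem.mp hnull] with x hx _
      simp only [mem_union, mem_singleton_iff, not_or, mem_sphere_iff_norm, sub_zero] at hx
      obtain ⟨hxs, hx0⟩ := hx
      rcases lt_or_gt_of_ne hxs with hlt | hgt
      · rw [grad_inner13 hx0 hlt,
          indicator_of_mem (by rwa [mem_ball_zero_iff])]
      · rw [grad_outer13 hgt,
          indicator_of_notMem (by rw [mem_ball_zero_iff]; push_neg; exact hgt.le)]
    rw [step1, setIntegral_indicator measurableSet_ball,
      show B1 ∩ Metric.ball (0:E2) sα = Metric.ball (0:E2) sα from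
        inter_eq_right.mpr (Metric.ball_subset_ball hs1.le),
      integral_const_mul, int_radial13 hα hspos]
    have key : (sα ^ (-α-2:ℝ))^2 * sα ^ (2*α) = sα ^ (-4:ℝ) := by
      rw [← Real.rpow_natCast (sα ^ (-α-2:ℝ)) 2, ← Real.rpow_mul hspos.le,
        ← Real.rpow_add hspos]
      congr 1; push_cast; ring
    constructor
    · rw [hc, hK]
      rw [← key]
      field_simp
    · have h4 : sα ^ (-4:ℝ) = ((2+α)/α)^2 := by
        have e1 : sα ^ (-4:ℝ) = ((sα^2 : ℝ))^(-2:ℝ) := by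
          rw [← Real.rpow_natCast sα 2, ← Real.rpow_mul hspos.le]
          norm_num
        rw [e1, hs2, show (-2:ℝ) = -((2:ℕ):ℝ) by norm_num,
          Real.rpow_neg (by positivity), Real.rpow_natCast, ← inv_pow, inv_div]
      rw [h4, hs2]
      field_simp
      ring
  · have h1 : Tendsto (fun α : ℝ => 4 * π * (2 + α) ^ 2) (nhdsWithin 0 (Set.Ioi 0))
        (nhds (4 * π * (2 + (0:ℝ)) ^ 2)) :=
      (Continuous.tendsto (by continuity) 0).mono_left nhdsWithin_le_nhds
    have h2 : Tendsto (fun α : ℝ => α⁻¹) (nhdsWithin 0 (Set.Ioi 0)) atTop :=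
      tendsto_inv_nhdsGT_zero
    have h3 := h1.pos_mul_atTop (by positivity) h2
    refine h3.congr (fun α => ?_)
    rw [div_eq_mul_inv]
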